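/- arXiv:2306.03512 — 5 statements merged into one kernel-verified Lean document; each statement's English description precedes it below -/
import Mathlib

section
/- Fix N ∈ ℕ, s, u > 0, 0 < ν₀, ν₁ < 1 with ν₀ + ν₁ = 1. Suppose sequences (aₙ)₀≤ₙ≤N and (bₙ)₀≤ₙ≤N₊₁ satisfy a₀ = 1, a_N = 0, b₀ = 1, b_{N+1} = 0, the recursion ((n+1)/N + s(N−n)/N + u)·aₙ = ((n+1)/N + uν₁)·aₙ₊₁ + s((N−n)/N)·aₙ₋₁ for 0 < n < N, and ((n−1)/N + s(N−n)/N + u)·bₙ = ((n−1)/N + uν₁)·bₙ₋₁ + s((N−n)/N)·bₙ₊₁ for 0 < n ≤ N. Then for every n with 0 < n ≤ N: uν₀·aₙ₋₁·bₙ + ∑_{i=n+1}^{N} (1/N)(a_{i−1}−a_i)(b_{i−1}−b_i) = uν₁·(aₙ₋₁−aₙ)(bₙ₋₁−bₙ) + ((n−1)/N)(aₙ₋₁−aₙ)(bₙ₋₁−bₙ). -/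
/-!
Put `F n := (u ν₁ + (n - 1)/N) (aₙ₋₁ - aₙ)(bₙ₋₁ - bₙ) - u ν₀ aₙ₋₁ bₙ`, so that the identity reads
`∑_{i=n+1}^{N} (1/N) wᵢ (bᵢ₋₁ - bᵢ) = F n`. Multiplying the recursion for `a` at `n` by
`bₙ - bₙ₊₁`, the one for `b` at `n` by `aₙ₋₁ - aₙ` and adding, the selection terms cancel and,
with `ν₀ + ν₁ = 1`, what is left is `F n - F (n+1) = (1/N) wₙ₊₁ (bₙ - bₙ₊₁)` for `0 < n < N`.
The recursion for `b` at `n = N`, where the selection term vanishes, together with `a_N = 0`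
gives `F N = 0`, and the sum telescopes.
-/

open Finset

theorem Finset.sum_Icc_succ_eq_sub_of_forall {M : Type*} [AddCommGroup M] {f g : ℕ → M}
    {n N : ℕ} (hnN : n ≤ N) (h : ∀ i, n ≤ i → i < N → g (i + 1) = f i - f (i + 1)) :
    ∑ i ∈ Icc (n + 1) N, g i = f n - f N := by
  induction N, hnN using Nat.le_induction with
  | base => simp
  | succ N hnN ih =>
    rw [sum_Icc_succ_top (by omega), ih fun i hni hiN => h i hni (by omega), h N hnN (by omega)]
    abel

section MoranFlux

variable {K : Type*} [Field K] (N : ℕ) (u ν₀ ν₁ : K) (a b : ℕ → K)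

def moranFlux (n : ℕ) : K :=
  (u * ν₁ + ((n : K) - 1) / N) * (a (n - 1) - a n) * (b (n - 1) - b n) - u * ν₀ * a (n - 1) * b n

variable {N u ν₀ ν₁ a b}

theorem moranFlux_eq_add_moranFlux_succ (s : K) (hν : ν₀ + ν₁ = 1) {n : ℕ}
    (hreca : (((n : K) + 1) / N + s * ((N : K) - n) / N + u) * a n
      = (((n : K) + 1) / N + u * ν₁) * a (n + 1) + s * (((N : K) - n) / N) * a (n - 1))
    (hrecb : (((n : K) - 1) / N + s * ((N : K) - n) / N + u) * b n
      = (((n : K) - 1) / N + u * ν₁) * b (n - 1) + s * (((N : K) - n) / N) * b (n + 1)) :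
    moranFlux N u ν₀ ν₁ a b n
      = 1 / N * (a n - a (n + 1)) * (b n - b (n + 1)) + moranFlux N u ν₀ ν₁ a b (n + 1) := by
  simp only [moranFlux, Nat.add_sub_cancel, Nat.cast_add_one]
  linear_combination -(b n - b (n + 1)) * hreca - (a (n - 1) - a n) * hrecb
    - u * (a (n - 1) * b n - a n * b (n + 1)) * hν

theorem moranFlux_self (s : K) (hν : ν₀ + ν₁ = 1) (haN : a N = 0)
    (hrecb : (((N : K) - 1) / N + s * ((N : K) - N) / N + u) * b N
      = (((N : K) - 1) / N + u * ν₁) * b (N - 1) + s * (((N : K) - N) / N) * b (N + 1)) :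
    moranFlux N u ν₀ ν₁ a b N = 0 := by
  simp only [sub_self, zero_div, mul_zero, zero_mul, add_zero] at hrecb
  simp only [moranFlux, haN, sub_zero]
  linear_combination -a (N - 1) * hrecb - u * a (N - 1) * b N * hν

end MoranFlux

theorem stmt6_general (N : ℕ) (s u ν₀ ν₁ : ℝ) (hν : ν₀ + ν₁ = 1)
    (a b : ℕ → ℝ) (haN : a N = 0)
    (hreca : ∀ n : ℕ, 0 < n → n < N →
      (((n:ℝ)+1)/N + s*((N:ℝ)-n)/N + u) * a n
        = (((n:ℝ)+1)/N + u*ν₁) * a (n+1) + s*(((N:ℝ)-n)/N) * a (n-1))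
    (hrecb : ∀ n : ℕ, 0 < n → n ≤ N →
      (((n:ℝ)-1)/N + s*((N:ℝ)-n)/N + u) * b n
        = (((n:ℝ)-1)/N + u*ν₁) * b (n-1) + s*(((N:ℝ)-n)/N) * b (n+1)) :
    ∀ n : ℕ, 0 < n → n ≤ N →
      u*ν₀*a (n-1)*b n
          + ∑ i ∈ Finset.Icc (n+1) N, (1/(N:ℝ))*(a (i-1) - a i)*(b (i-1) - b i)
        = u*ν₁*(a (n-1) - a n)*(b (n-1) - b n)
          + (((n:ℝ)-1)/N)*(a (n-1) - a n)*(b (n-1) - b n) := by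
  intro n hn hnN
  have hsum : ∑ i ∈ Icc (n + 1) N, 1 / (N : ℝ) * (a (i - 1) - a i) * (b (i - 1) - b i)
      = moranFlux N u ν₀ ν₁ a b n := by
    rw [sum_Icc_succ_eq_sub_of_forall (f := moranFlux N u ν₀ ν₁ a b) hnN fun i hni hiN => ?_,
      moranFlux_self s hν haN (hrecb N (hn.trans_le hnN) le_rfl), sub_zero]
    rw [moranFlux_eq_add_moranFlux_succ s hν (hreca i (by omega) hiN)
      (hrecb i (by omega) hiN.le), Nat.add_sub_cancel]
    ring
  rw [hsum, moranFlux]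
  ring

theorem stmt6 (N : ℕ) (hN : 0 < N) (s u ν₀ ν₁ : ℝ) (hs : 0 < s) (hu : 0 < u)
    (hν₀ : 0 < ν₀) (hν₀1 : ν₀ < 1) (hν₁ : 0 < ν₁) (hν₁1 : ν₁ < 1) (hν : ν₀ + ν₁ = 1)
    (a b : ℕ → ℝ) (ha0 : a 0 = 1) (haN : a N = 0) (haN1 : a (N+1) = 0)
    (hb0 : b 0 = 1) (hbN1 : b (N+1) = 0)
    (hreca : ∀ n : ℕ, 0 < n → n < N →
      (((n:ℝ)+1)/N + s*((N:ℝ)-n)/N + u) * a n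
        = (((n:ℝ)+1)/N + u*ν₁) * a (n+1) + s*(((N:ℝ)-n)/N) * a (n-1))
    (hrecb : ∀ n : ℕ, 0 < n → n ≤ N →
      (((n:ℝ)-1)/N + s*((N:ℝ)-n)/N + u) * b n
        = (((n:ℝ)-1)/N + u*ν₁) * b (n-1) + s*(((N:ℝ)-n)/N) * b (n+1)) :
    ∀ n : ℕ, 0 < n → n ≤ N →
      u*ν₀*a (n-1)*b n
          + ∑ i ∈ Finset.Icc (n+1) N, (1/(N:ℝ))*(a (i-1) - a i)*(b (i-1) - b i)
        = u*ν₁*(a (n-1) - a n)*(b (n-1) - b n)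
          + (((n:ℝ)-1)/N)*(a (n-1) - a n)*(b (n-1) - b n) :=
  stmt6_general N s u ν₀ ν₁ hν a b haN hreca hrecb
end

section
/- Under the hypotheses of the flux identity (the two finite recursions with boundary conditions a₀ = b₀ = 1, a_N = a_{N+1} = 0, b_{N+1} = 0), the total fluxes balance: uν₀ ∑_{n=1}^N aₙ₋₁ bₙ = uν₁ ∑_{n=1}^N (aₙ₋₁ − aₙ)(bₙ₋₁ − bₙ). -/
/-!
Multiply the recursion for `b` at `i + 1` by `(i + 1) (aᵢ - aᵢ₊₁)` and the recursion for `a`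
at `i + 1` by `(i + 1) (bᵢ₊₁ - bᵢ₊₂)` and add: the selection terms cancel, and what remains
says that the `i`-th flux difference `uν₀ aᵢ bᵢ₊₁ - uν₁ (aᵢ - aᵢ₊₁)(bᵢ - bᵢ₊₁)` is the increment
of an explicit potential `Φ k`. The sum over `i < N` telescopes, and the potential vanishes at both
ends: at `0` because `Φ k` is a multiple of `k`, at `N` because `a_N = a_{N+1} = 0`.
-/

section FluxBalance

-- `κ` plays the role of `1 / N`, `σ n` of `s (N - n) / N`, and `μ₀`, `μ₁` of `u ν₀`, `u ν₁`.
variable (κ μ₀ μ₁ : ℝ) (σ a b : ℕ → ℝ)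

def fluxPotential (k : ℕ) : ℝ :=
  -k * ((μ₁ + (k + 1) * κ) * (a k * b k - a (k + 1) * b k + a (k + 1) * b (k + 1))
    - (μ₀ + μ₁ + (k + 1) * κ) * (a k * b (k + 1)))

variable {κ μ₀ μ₁ σ a b}

theorem flux_eq_fluxPotential_succ_sub (i : ℕ)
    (ha : ((i + 2) * κ + σ (i + 1) + (μ₀ + μ₁)) * a (i + 1)
      = ((i + 2) * κ + μ₁) * a (i + 2) + σ (i + 1) * a i)
    (hb : (i * κ + σ (i + 1) + (μ₀ + μ₁)) * b (i + 1)
      = (i * κ + μ₁) * b i + σ (i + 1) * b (i + 2)) :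
    μ₀ * (a i * b (i + 1)) - μ₁ * ((a i - a (i + 1)) * (b i - b (i + 1)))
      = fluxPotential κ μ₀ μ₁ a b (i + 1) - fluxPotential κ μ₀ μ₁ a b i := by
  unfold fluxPotential
  push_cast
  linear_combination ((i : ℝ) + 1) * (a i - a (i + 1)) * hb
    + ((i : ℝ) + 1) * (b (i + 1) - b (i + 2)) * ha

theorem flux_balance (N : ℕ)
    (ha : ∀ n : ℕ, 0 < n → n ≤ N → ((n + 1) * κ + σ n + (μ₀ + μ₁)) * a n
      = ((n + 1) * κ + μ₁) * a (n + 1) + σ n * a (n - 1))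
    (hb : ∀ n : ℕ, 0 < n → n ≤ N → ((n - 1) * κ + σ n + (μ₀ + μ₁)) * b n
      = ((n - 1) * κ + μ₁) * b (n - 1) + σ n * b (n + 1))
    (haN : a N = 0) (haN1 : a (N + 1) = 0) :
    μ₀ * ∑ i ∈ Finset.range N, a i * b (i + 1)
      = μ₁ * ∑ i ∈ Finset.range N, (a i - a (i + 1)) * (b i - b (i + 1)) := by
  have step (i : ℕ) (hi : i ∈ Finset.range N) :
      μ₀ * (a i * b (i + 1)) - μ₁ * ((a i - a (i + 1)) * (b i - b (i + 1)))
        = fluxPotential κ μ₀ μ₁ a b (i + 1) - fluxPotential κ μ₀ μ₁ a b i := by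
    have hiN : i + 1 ≤ N := Finset.mem_range.mp hi
    have ha' := ha (i + 1) i.succ_pos hiN
    have hb' := hb (i + 1) i.succ_pos hiN
    simp only [Nat.add_sub_cancel, add_assoc, one_add_one_eq_two] at ha' hb'
    push_cast at ha' hb'
    exact flux_eq_fluxPotential_succ_sub (σ := σ) i
      (by linear_combination ha') (by linear_combination hb')
  rw [← sub_eq_zero, Finset.mul_sum, Finset.mul_sum, ← Finset.sum_sub_distrib,
    Finset.sum_congr rfl step, Finset.sum_range_sub]
  simp [fluxPotential, haN, haN1]

end FluxBalance

theorem stmt7_general (N : ℕ) (s u ν₀ ν₁ : ℝ) (hν : ν₀ + ν₁ = 1)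
    (a b : ℕ → ℝ) (haN : a N = 0) (haN1 : a (N+1) = 0)
    (hreca : ∀ n : ℕ, 0 < n → n < N →
      (((n:ℝ)+1)/N + s*((N:ℝ)-n)/N + u) * a n
        = (((n:ℝ)+1)/N + u*ν₁) * a (n+1) + s*(((N:ℝ)-n)/N) * a (n-1))
    (hrecb : ∀ n : ℕ, 0 < n → n ≤ N →
      (((n:ℝ)-1)/N + s*((N:ℝ)-n)/N + u) * b n
        = (((n:ℝ)-1)/N + u*ν₁) * b (n-1) + s*(((N:ℝ)-n)/N) * b (n+1)) :
    u*ν₀ * ∑ n ∈ Finset.Icc 1 N, a (n-1) * b n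
      = u*ν₁ * ∑ n ∈ Finset.Icc 1 N, (a (n-1) - a n) * (b (n-1) - b n) := by
  have shift (f : ℕ → ℝ) : ∑ n ∈ Finset.Icc 1 N, f n = ∑ i ∈ Finset.range N, f (i + 1) := by
    rw [Finset.range_eq_Ico, Finset.sum_Ico_add' f 0 N 1]
    rfl
  simp only [shift, Nat.add_sub_cancel]
  refine flux_balance (κ := (N : ℝ)⁻¹) (σ := fun n ↦ s * (((N : ℝ) - n) / N)) N
    (fun n hn hnN ↦ ?_) (fun n hn hnN ↦ ?_) haN haN1
  · rcases hnN.lt_or_eq with hnN | rfl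
    · linear_combination hreca n hn hnN + u * a n * hν
    -- at `n = N` both sides vanish: `a N = a (N + 1) = 0` and the selection term is `0`
    · simp [haN, haN1]
  · linear_combination hrecb n hn hnN + u * b n * hν

theorem stmt7 (N : ℕ) (hN : 0 < N) (s u ν₀ ν₁ : ℝ) (hs : 0 < s) (hu : 0 < u)
    (hν₀ : 0 < ν₀) (hν₀1 : ν₀ < 1) (hν₁ : 0 < ν₁) (hν₁1 : ν₁ < 1) (hν : ν₀ + ν₁ = 1)
    (a b : ℕ → ℝ) (ha0 : a 0 = 1) (haN : a N = 0) (haN1 : a (N+1) = 0)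
    (hb0 : b 0 = 1) (hbN1 : b (N+1) = 0)
    (hreca : ∀ n : ℕ, 0 < n → n < N →
      (((n:ℝ)+1)/N + s*((N:ℝ)-n)/N + u) * a n
        = (((n:ℝ)+1)/N + u*ν₁) * a (n+1) + s*(((N:ℝ)-n)/N) * a (n-1))
    (hrecb : ∀ n : ℕ, 0 < n → n ≤ N →
      (((n:ℝ)-1)/N + s*((N:ℝ)-n)/N + u) * b n
        = (((n:ℝ)-1)/N + u*ν₁) * b (n-1) + s*(((N:ℝ)-n)/N) * b (n+1)) :
    u*ν₀ * ∑ n ∈ Finset.Icc 1 N, a (n-1) * b n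
      = u*ν₁ * ∑ n ∈ Finset.Icc 1 N, (a (n-1) - a n) * (b (n-1) - b n) :=
  stmt7_general N s u ν₀ ν₁ hν a b haN haN1 hreca hrecb
end

section
/- Let σ > 0, θ > 0, 0 < ν₀, ν₁ < 1 with ν₀ + ν₁ = 1. Suppose (βₙ)ₙ≥₀ satisfies β₀ = 1, βₙ → 0, and (n−1+σ+θ)βₙ = σβₙ₊₁ + (n−1+θν₁)βₙ₋₁ for all n ≥ 1, with 0 < βₙ₊₁ < βₙ for all n. Define ᾱₙ := σⁿ(βₙ₊₁ − βₙ₊₂)/(Fₙ(β₁ − β₂)) for n ≥ 1, ᾱ₀ := 1, where Fₙ := ∏_{j=1}^n (j + θν₁). Then (ᾱₙ) satisfies the recursion (n+1+σ+θ)ᾱₙ = (n+1+θν₁)ᾱₙ₊₁ + σᾱₙ₋₁ for all n ≥ 1, and ᾱₙ → 0 as n → ∞. -/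
/-!
Subtracting consecutive instances of the recursion for `β` shows that the differences
`γₙ = βₙ₊₁ - βₙ₊₂` satisfy `(n+1+σ+θ) γₙ = σ γₙ₊₁ + (n+θν₁) γₙ₋₁`. Rescaling by `σⁿ / Fₙ` and using
`Fₙ₊₁ = Fₙ (n+1+θν₁)` moves the factor `n+θν₁` from the `γₙ₋₁` term to the `ᾱₙ₊₁` term, which is
exactly the recursion for `ᾱ`. Since `0 < γₙ ≤ β₀` and `Fₙ ≥ n!`, `ᾱₙ = O(σⁿ / n!)` tends to `0`.
-/

open Finset Filter Topology
open scoped Nat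

theorem prod_Icc_one_succ_add (a : ℝ) (n : ℕ) :
    ∏ j ∈ Icc 1 (n + 1), ((j : ℝ) + a) = (∏ j ∈ Icc 1 n, ((j : ℝ) + a)) * ((n : ℝ) + 1 + a) := by
  rw [prod_Icc_succ_top (by omega)]
  push_cast
  ring

theorem factorial_le_prod_Icc_one_add {a : ℝ} (ha : 0 ≤ a) (n : ℕ) :
    (n ! : ℝ) ≤ ∏ j ∈ Icc 1 n, ((j : ℝ) + a) := by
  rw [← Ico_add_one_right_eq_Icc, ← prod_Ico_id_eq_factorial, Nat.cast_prod]
  exact prod_le_prod (fun j _ => by positivity) (fun j _ => le_add_of_nonneg_right ha)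

theorem prod_Icc_one_add_pos {a : ℝ} (ha : 0 ≤ a) (n : ℕ) : 0 < ∏ j ∈ Icc 1 n, ((j : ℝ) + a) :=
  (Nat.cast_pos.mpr n.factorial_pos).trans_le (factorial_le_prod_Icc_one_add ha n)

theorem sub_succ_recursion {σ θ a : ℝ} {β : ℕ → ℝ}
    (hβ : ∀ n : ℕ, 1 ≤ n →
      (((n : ℝ) - 1) + σ + θ) * β n = σ * β (n + 1) + (((n : ℝ) - 1) + a) * β (n - 1))
    (m : ℕ) :
    ((m : ℝ) + 2 + σ + θ) * (β (m + 2) - β (m + 3)) =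
      σ * (β (m + 3) - β (m + 4)) + ((m : ℝ) + 1 + a) * (β (m + 1) - β (m + 2)) := by
  have h₂ := hβ (m + 2) (by omega)
  have h₃ := hβ (m + 3) (by omega)
  simp only [Nat.reduceSubDiff] at h₂ h₃
  push_cast at h₂ h₃
  linear_combination h₂ - h₃

theorem rescaled_recursion {σ θ a C : ℝ} {γ F α : ℕ → ℝ}
    (hγ : ∀ m : ℕ, ((m : ℝ) + 2 + σ + θ) * γ (m + 1) = σ * γ (m + 2) + ((m : ℝ) + 1 + a) * γ m)
    (hF : ∀ n : ℕ, F (n + 1) = F n * ((n : ℝ) + 1 + a)) (hF₀ : ∀ n, F n ≠ 0)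
    (ha : ∀ n : ℕ, (n : ℝ) + 1 + a ≠ 0) (hC : C ≠ 0)
    (hα : ∀ n, α n = σ ^ n * γ n / (F n * C)) (m : ℕ) :
    ((m : ℝ) + 2 + σ + θ) * α (m + 1) = ((m : ℝ) + 2 + a) * α (m + 2) + σ * α m := by
  have hFm := hF₀ m
  have ham := ha m
  have ham' := ha (m + 1)
  rw [hα, hα, hα, hF (m + 1), hF m]
  field_simp
  push_cast
  linear_combination σ ^ (m + 1) * ((m : ℝ) + 2 + a) * hγ m

theorem tendsto_pow_mul_div_of_factorial_le {σ B : ℝ} {u F : ℕ → ℝ}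
    (hu : ∀ n, |u n| ≤ B) (hF : ∀ n, (n ! : ℝ) ≤ F n) :
    Tendsto (fun n => σ ^ n * u n / F n) atTop (𝓝 0) := by
  have hB : 0 ≤ B := (abs_nonneg _).trans (hu 0)
  have hlim : Tendsto (fun n : ℕ => |σ| ^ n / n ! * B) atTop (𝓝 0) := by
    simpa using (FloorSemiring.tendsto_pow_div_factorial_atTop |σ|).mul_const B
  refine squeeze_zero_norm (fun n => ?_) hlim
  have hfac : (0 : ℝ) < n ! := Nat.cast_pos.mpr n.factorial_pos
  rw [Real.norm_eq_abs, abs_div, abs_mul, abs_pow, abs_of_pos (hfac.trans_le (hF n)),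
    div_mul_eq_mul_div]
  exact div_le_div₀ (by positivity) (mul_le_mul_of_nonneg_left (hu n) (by positivity)) hfac (hF n)

theorem stmt8_general (σ θ ν₁ : ℝ) (hθ : 0 < θ)
    (hν₁ : 0 < ν₁)
    (β : ℕ → ℝ)
    (hβdec : ∀ n : ℕ, 0 < β (n+1) ∧ β (n+1) < β n)
    (hβrec : ∀ n : ℕ, 1 ≤ n →
      (((n:ℝ)-1) + σ + θ) * β n = σ * β (n+1) + (((n:ℝ)-1) + θ*ν₁) * β (n-1))
    (F : ℕ → ℝ) (hF : ∀ n : ℕ, F n = ∏ j ∈ Finset.Icc 1 n, ((j:ℝ) + θ*ν₁))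
    (α : ℕ → ℝ) (hα0 : α 0 = 1)
    (hα : ∀ n : ℕ, 1 ≤ n → α n = σ^n * (β (n+1) - β (n+2)) / (F n * (β 1 - β 2))) :
    (∀ n : ℕ, 1 ≤ n →
      ((n:ℝ)+1+σ+θ) * α n = ((n:ℝ)+1+θ*ν₁) * α (n+1) + σ * α (n-1)) ∧
    Filter.Tendsto α Filter.atTop (nhds 0) := by
  have ha : 0 ≤ θ * ν₁ := by positivity
  have hFpos : ∀ n, 0 < F n := fun n => hF n ▸ prod_Icc_one_add_pos ha n
  have hC : 0 < β 1 - β 2 := sub_pos.mpr (hβdec 1).2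
  have hα' : ∀ n, α n = σ ^ n * (β (n + 1) - β (n + 2)) / (F n * (β 1 - β 2)) := by
    rintro (_ | n)
    · simp [hα0, hF 0, hC.ne']
    · exact hα (n + 1) n.succ_pos
  refine ⟨fun n hn => ?_, ?_⟩
  · obtain ⟨m, rfl⟩ := Nat.exists_eq_add_of_le' hn
    have hrec := rescaled_recursion (sub_succ_recursion hβrec)
      (fun n => by rw [hF, hF, prod_Icc_one_succ_add]) (fun n => (hFpos n).ne')
      (fun n => by positivity) hC.ne' hα' m
    rw [Nat.add_sub_cancel]
    push_cast
    linear_combination hrec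
  · have hβanti : Antitone β := antitone_nat_of_succ_le fun n => (hβdec n).2.le
    have hγ : ∀ n, |β (n + 1) - β (n + 2)| ≤ β 0 := fun n => by
      rw [abs_of_pos (sub_pos.mpr (hβdec (n + 1)).2)]
      linarith [(hβdec (n + 1)).1, hβanti (Nat.zero_le (n + 1))]
    have hfac : ∀ n, (n ! : ℝ) ≤ F n := fun n => hF n ▸ factorial_le_prod_Icc_one_add ha n
    convert (tendsto_pow_mul_div_of_factorial_le (σ := σ) hγ hfac).div_const (β 1 - β 2) using 1
    · exact funext fun n => by rw [hα', div_div]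
    · rw [zero_div]

theorem stmt8 (σ θ ν₀ ν₁ : ℝ) (hσ : 0 < σ) (hθ : 0 < θ)
    (hν₀ : 0 < ν₀) (hν₀1 : ν₀ < 1) (hν₁ : 0 < ν₁) (hν₁1 : ν₁ < 1) (hν : ν₀ + ν₁ = 1)
    (β : ℕ → ℝ) (hβ0 : β 0 = 1) (hβlim : Filter.Tendsto β Filter.atTop (nhds 0))
    (hβdec : ∀ n : ℕ, 0 < β (n+1) ∧ β (n+1) < β n)
    (hβrec : ∀ n : ℕ, 1 ≤ n →
      (((n:ℝ)-1) + σ + θ) * β n = σ * β (n+1) + (((n:ℝ)-1) + θ*ν₁) * β (n-1))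
    (F : ℕ → ℝ) (hF : ∀ n : ℕ, F n = ∏ j ∈ Finset.Icc 1 n, ((j:ℝ) + θ*ν₁))
    (α : ℕ → ℝ) (hα0 : α 0 = 1)
    (hα : ∀ n : ℕ, 1 ≤ n → α n = σ^n * (β (n+1) - β (n+2)) / (F n * (β 1 - β 2))) :
    (∀ n : ℕ, 1 ≤ n →
      ((n:ℝ)+1+σ+θ) * α n = ((n:ℝ)+1+θ*ν₁) * α (n+1) + σ * α (n-1)) ∧
    Filter.Tendsto α Filter.atTop (nhds 0) :=
  stmt8_general σ θ ν₁ hθ hν₁ β hβdec hβrec F hF α hα0 hα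
end

section
/- Let σ > 0 and let αₙ(σ) and βₙ(σ) be differentiable in σ with α₀ ≡ 1, satisfying α'ₙ = αₙ₋₁ − K αₙ for n ≥ 1 (where K := (1/σ)[(1+θν₁)(α₀−α₁) + σ + θν₀]) and β'ₙ = β₁βₙ − βₙ₊₁ for n ≥ 1, with 0 < βₙ₊₁ < βₙ ≤ 1 and 0 ≤ αₙ₊₁ < αₙ and all series ∑αₙβₙ etc. absolutely convergent and termwise differentiable. Set A := ∑_{n≥1} αₙ₋₁βₙ and B := ∑_{n≥1} αₙβₙ. Then A' = (β₁−K)A + Kβ₁ and B' = (β₁−K)B + β₁, and hence d/dσ [θν₀ A/(A−B)] = θν₀ β₁ (A − KB)/(A−B)² = θν₀ β₁ (∑_{n≥1} α'ₙ βₙ)/(A−B)². -/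
/-!
Substituting the recurrences for `α'ₙ` and `β'ₙ` termwise, the series for `A'` contains
`∑ αₙ₋₁βₙ₊₁` from `α'` and `−∑ αₙβₙ₊₂` from `β'`, which cancel; the series for `B'` contains
`−∑ αₙ₊₁βₙ₊₂ = β₁ − A` because `α₀ = 1`. This gives the two linear equations for `A'` and `B'`,
and with them the quotient rule yields `A B' − A' B = β₁ (A − K B) = β₁ ∑ α'ₙ₊₁βₙ₊₁`.
The denominator `A − B = ∑ (αₙ − αₙ₊₁) βₙ₊₁` is positive since `α` strictly decreases.
-/

theorem HasDerivAt.const_mul_div_sub {f g : ℝ → ℝ} {f' g' x : ℝ} (c : ℝ)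
    (hf : HasDerivAt f f' x) (hg : HasDerivAt g g' x) (hfg : f x - g x ≠ 0) :
    HasDerivAt (fun t => c * f t / (f t - g t))
      (c * (f x * g' - f' * g x) / (f x - g x) ^ 2) x := by
  refine ((hf.const_mul c).div (hf.sub hg) hfg).congr_deriv ?_
  simp only [Pi.sub_apply]
  ring

section Series

variable {a b da db : ℕ → ℝ} {K : ℝ}

theorem hasSum_succ_mul_of_recurrence (hda : ∀ n, da (n + 1) = a n - K * a (n + 1))
    {c : ℕ → ℝ} {S T : ℝ} (hS : HasSum (fun n => a n * c n) S)
    (hT : HasSum (fun n => a (n + 1) * c n) T) :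
    HasSum (fun n => da (n + 1) * c n) (S - K * T) := by
  have h : (fun n => da (n + 1) * c n) = fun n => a n * c n - K * (a (n + 1) * c n) :=
    funext fun n => by rw [hda]; ring
  exact h ▸ hS.sub (hT.mul_left K)

theorem hasSum_mul_succ_of_recurrence (hdb : ∀ n, db (n + 1) = b 1 * b (n + 1) - b (n + 2))
    {x : ℕ → ℝ} {S T : ℝ} (hS : HasSum (fun n => x n * b (n + 1)) S)
    (hT : HasSum (fun n => x n * b (n + 2)) T) :
    HasSum (fun n => x n * db (n + 1)) (b 1 * S - T) := by
  have h : (fun n => x n * db (n + 1)) = fun n => b 1 * (x n * b (n + 1)) - x n * b (n + 2) :=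
    funext fun n => by rw [hdb]; ring
  exact h ▸ (hS.mul_left (b 1)).sub hT

theorem hasSum_succ_mul_succ_succ (ha0 : a 0 = 1) {A : ℝ}
    (hA : HasSum (fun n => a n * b (n + 1)) A) :
    HasSum (fun n => a (n + 1) * b (n + 2)) (A - b 1) := by
  simpa [ha0] using (hasSum_nat_add_iff' 1).mpr hA

variable (ha0 : a 0 = 1) (hda : ∀ n, da (n + 1) = a n - K * a (n + 1))
  (hdb : ∀ n, db (n + 1) = b 1 * b (n + 1) - b (n + 2))
include ha0 hda hdb

theorem hasSum_deriv_seriesA (hda0 : da 0 = 0) (ha : ∀ n, 0 ≤ a n) (hb0 : ∀ n, 0 ≤ b n)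
    (hb : Antitone b) {A : ℝ} (hA : HasSum (fun n => a n * b (n + 1)) A) :
    HasSum (fun n => da n * b (n + 1) + a n * db (n + 1)) ((b 1 - K) * A + K * b 1) := by
  obtain ⟨T, hT⟩ : Summable (fun n => a n * b (n + 2)) :=
    hA.summable.of_nonneg_of_le (fun n => mul_nonneg (ha n) (hb0 _))
      (fun n => mul_le_mul_of_nonneg_left (hb (Nat.le_succ _)) (ha n))
  have hda_sum : HasSum (fun n => da n * b (n + 1)) (T - K * (A - b 1)) := by
    have h := (hasSum_nat_add_iff (f := fun n => da n * b (n + 1)) 1).mp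
      (hasSum_succ_mul_of_recurrence hda hT (hasSum_succ_mul_succ_succ ha0 hA))
    rwa [Finset.sum_range_one, hda0, zero_mul, add_zero] at h
  convert hda_sum.add (hasSum_mul_succ_of_recurrence hdb hA hT) using 1
  ring

theorem hasSum_deriv_seriesB {A B : ℝ} (hA : HasSum (fun n => a n * b (n + 1)) A)
    (hB : HasSum (fun n => a (n + 1) * b (n + 1)) B) :
    HasSum (fun n => da (n + 1) * b (n + 1) + a (n + 1) * db (n + 1))
      ((b 1 - K) * B + b 1) := by
  convert (hasSum_succ_mul_of_recurrence hda hA hB).add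
    (hasSum_mul_succ_of_recurrence hdb hB (hasSum_succ_mul_succ_succ ha0 hA)) using 1
  ring

end Series

theorem stmt10_general (σ θ ν₀ : ℝ)
    (α β : ℝ → ℕ → ℝ) (dα dβ : ℕ → ℝ) (K : ℝ)
    (hα0 : ∀ t, α t 0 = 1) (hdα0 : dα 0 = 0)
    (hdα : ∀ n : ℕ, 1 ≤ n → dα n = α σ (n-1) - K * α σ n)
    (hdβ : ∀ n : ℕ, 1 ≤ n → dβ n = β σ 1 * β σ n - β σ (n+1))
    (hβmono : ∀ n : ℕ, 0 < β σ (n+1) ∧ β σ (n+1) < β σ n ∧ β σ n ≤ 1)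
    (hαmono : ∀ n : ℕ, 0 ≤ α σ (n+1) ∧ α σ (n+1) < α σ n)
    (hsumA : Summable (fun n : ℕ => α σ n * β σ (n+1)))
    (hsumB : Summable (fun n : ℕ => α σ (n+1) * β σ (n+1)))
    (hA' : HasDerivAt (fun t => ∑' n : ℕ, α t n * β t (n+1))
      (∑' n : ℕ, (dα n * β σ (n+1) + α σ n * dβ (n+1))) σ)
    (hB' : HasDerivAt (fun t => ∑' n : ℕ, α t (n+1) * β t (n+1))
      (∑' n : ℕ, (dα (n+1) * β σ (n+1) + α σ (n+1) * dβ (n+1))) σ) :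
    (∑' n : ℕ, (dα n * β σ (n+1) + α σ n * dβ (n+1)))
        = (β σ 1 - K) * (∑' n : ℕ, α σ n * β σ (n+1)) + K * β σ 1 ∧
    (∑' n : ℕ, (dα (n+1) * β σ (n+1) + α σ (n+1) * dβ (n+1)))
        = (β σ 1 - K) * (∑' n : ℕ, α σ (n+1) * β σ (n+1)) + β σ 1 ∧
    HasDerivAt (fun t => θ*ν₀ * (∑' n : ℕ, α t n * β t (n+1))
        / ((∑' n : ℕ, α t n * β t (n+1)) - (∑' n : ℕ, α t (n+1) * β t (n+1))))
      (θ*ν₀ * β σ 1 * (∑' n : ℕ, dα (n+1) * β σ (n+1))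
        / ((∑' n : ℕ, α σ n * β σ (n+1)) - (∑' n : ℕ, α σ (n+1) * β σ (n+1)))^2) σ ∧
    θ*ν₀ * β σ 1 * (∑' n : ℕ, dα (n+1) * β σ (n+1))
        / ((∑' n : ℕ, α σ n * β σ (n+1)) - (∑' n : ℕ, α σ (n+1) * β σ (n+1)))^2
      = θ*ν₀ * β σ 1 * ((∑' n : ℕ, α σ n * β σ (n+1)) - K * (∑' n : ℕ, α σ (n+1) * β σ (n+1)))
        / ((∑' n : ℕ, α σ n * β σ (n+1)) - (∑' n : ℕ, α σ (n+1) * β σ (n+1)))^2 := by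
  have hda : ∀ n, dα (n + 1) = α σ n - K * α σ (n + 1) := fun n => by
    simpa using hdα (n + 1) n.succ_pos
  have hdb : ∀ n, dβ (n + 1) = β σ 1 * β σ (n + 1) - β σ (n + 2) := fun n =>
    hdβ (n + 1) n.succ_pos
  have ha : ∀ n, 0 ≤ α σ n
    | 0 => by simp [hα0]
    | n + 1 => (hαmono n).1
  have hb : Antitone (β σ) := antitone_nat_of_succ_le fun n => (hβmono n).2.1.le
  have hb0 : ∀ n, 0 ≤ β σ n := fun n => (hβmono n).1.le.trans (hb n.le_succ)
  have hA := hasSum_deriv_seriesA (hα0 σ) hda hdb hdα0 ha hb0 hb hsumA.hasSum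
  have hB := hasSum_deriv_seriesB (hα0 σ) hda hdb hsumA.hasSum hsumB.hasSum
  have hL := (hasSum_succ_mul_of_recurrence hda hsumA.hasSum hsumB.hasSum).tsum_eq
  have hBA : ∑' n, α σ (n + 1) * β σ (n + 1) < ∑' n, α σ n * β σ (n + 1) :=
    hasSum_lt (fun n => mul_le_mul_of_nonneg_right (hαmono n).2.le (hβmono n).1.le)
      (mul_lt_mul_of_pos_right (hαmono 0).2 (hβmono 0).1) hsumB.hasSum hsumA.hasSum
  refine ⟨hA.tsum_eq, hB.tsum_eq, ?_, by rw [hL]⟩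
  rw [hA.tsum_eq] at hA'
  rw [hB.tsum_eq] at hB'
  convert hA'.const_mul_div_sub (θ * ν₀) hB' (sub_ne_zero.mpr hBA.ne') using 2
  rw [hL]
  ring

theorem stmt10 (σ θ ν₀ ν₁ : ℝ) (hσ : 0 < σ) (hθ : 0 < θ)
    (hν₀ : 0 < ν₀) (hν₁ : 0 < ν₁) (hν : ν₀ + ν₁ = 1)
    (α β : ℝ → ℕ → ℝ) (dα dβ : ℕ → ℝ) (K : ℝ)
    (hα0 : ∀ t, α t 0 = 1) (hdα0 : dα 0 = 0)
    (hK : K = (1/σ) * ((1 + θ*ν₁) * (α σ 0 - α σ 1) + σ + θ*ν₀))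
    (hdα : ∀ n : ℕ, 1 ≤ n → dα n = α σ (n-1) - K * α σ n)
    (hdβ : ∀ n : ℕ, 1 ≤ n → dβ n = β σ 1 * β σ n - β σ (n+1))
    (hβmono : ∀ n : ℕ, 0 < β σ (n+1) ∧ β σ (n+1) < β σ n ∧ β σ n ≤ 1)
    (hαmono : ∀ n : ℕ, 0 ≤ α σ (n+1) ∧ α σ (n+1) < α σ n)
    (hsumA : Summable (fun n : ℕ => α σ n * β σ (n+1)))
    (hsumB : Summable (fun n : ℕ => α σ (n+1) * β σ (n+1)))
    (hsumdA : Summable (fun n : ℕ => dα n * β σ (n+1) + α σ n * dβ (n+1)))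
    (hsumdB : Summable (fun n : ℕ => dα (n+1) * β σ (n+1) + α σ (n+1) * dβ (n+1)))
    (hsumd : Summable (fun n : ℕ => dα (n+1) * β σ (n+1)))
    (hA' : HasDerivAt (fun t => ∑' n : ℕ, α t n * β t (n+1))
      (∑' n : ℕ, (dα n * β σ (n+1) + α σ n * dβ (n+1))) σ)
    (hB' : HasDerivAt (fun t => ∑' n : ℕ, α t (n+1) * β t (n+1))
      (∑' n : ℕ, (dα (n+1) * β σ (n+1) + α σ (n+1) * dβ (n+1))) σ) :
    (∑' n : ℕ, (dα n * β σ (n+1) + α σ n * dβ (n+1)))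
        = (β σ 1 - K) * (∑' n : ℕ, α σ n * β σ (n+1)) + K * β σ 1 ∧
    (∑' n : ℕ, (dα (n+1) * β σ (n+1) + α σ (n+1) * dβ (n+1)))
        = (β σ 1 - K) * (∑' n : ℕ, α σ (n+1) * β σ (n+1)) + β σ 1 ∧
    HasDerivAt (fun t => θ*ν₀ * (∑' n : ℕ, α t n * β t (n+1))
        / ((∑' n : ℕ, α t n * β t (n+1)) - (∑' n : ℕ, α t (n+1) * β t (n+1))))
      (θ*ν₀ * β σ 1 * (∑' n : ℕ, dα (n+1) * β σ (n+1))
        / ((∑' n : ℕ, α σ n * β σ (n+1)) - (∑' n : ℕ, α σ (n+1) * β σ (n+1)))^2) σ ∧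
    θ*ν₀ * β σ 1 * (∑' n : ℕ, dα (n+1) * β σ (n+1))
        / ((∑' n : ℕ, α σ n * β σ (n+1)) - (∑' n : ℕ, α σ (n+1) * β σ (n+1)))^2
      = θ*ν₀ * β σ 1 * ((∑' n : ℕ, α σ n * β σ (n+1)) - K * (∑' n : ℕ, α σ (n+1) * β σ (n+1)))
        / ((∑' n : ℕ, α σ n * β σ (n+1)) - (∑' n : ℕ, α σ (n+1) * β σ (n+1)))^2 :=
  stmt10_general σ θ ν₀ α β dα dβ K hα0 hdα0 hdα hdβ hβmono hαmono hsumA hsumB hA' hB'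
end

section
/- Let (aₙ) and (bₙ) be real sequences satisfying, for a given N ∈ ℕ and constants s, u > 0, ν₁ ∈ (0,1), ν₀ = 1−ν₁: ((i+1)/N + uν₁)(aᵢ − aᵢ₊₁) = s((N−i)/N)(aᵢ₋₁ − aᵢ) − uν₀ aᵢ for 0 < i < N, and ((i−1)/N + uν₁)(bᵢ₋₁ − bᵢ) = s((N−i)/N)(bᵢ − bᵢ₊₁) + uν₀ bᵢ for 0 < i ≤ N. Then for all 1 ≤ i ≤ N−1: uν₀(aᵢ₋₁bᵢ − aᵢbᵢ₊₁) + (1/N)(aᵢ−aᵢ₊₁)(bᵢ−bᵢ₊₁) = ((i−1)/N + uν₁)(aᵢ₋₁−aᵢ)(bᵢ₋₁−bᵢ) − (i/N + uν₁)(aᵢ−aᵢ₊₁)(bᵢ−bᵢ₊₁). -/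
theorem stmt17 (N : ℕ) (hN : 0 < N) (s u ν₁ ν₀ : ℝ) (hs : 0 < s) (hu : 0 < u)
    (hν₁ : ν₁ ∈ Set.Ioo (0:ℝ) 1) (hν₀ : ν₀ = 1 - ν₁)
    (a b : ℕ → ℝ)
    (hra : ∀ i : ℕ, 0 < i → i < N →
      (((i:ℝ)+1)/N + u*ν₁) * (a i - a (i+1))
        = s*(((N:ℝ)-i)/N) * (a (i-1) - a i) - u*ν₀ * a i)
    (hrb : ∀ i : ℕ, 0 < i → i ≤ N →
      (((i:ℝ)-1)/N + u*ν₁) * (b (i-1) - b i)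
        = s*(((N:ℝ)-i)/N) * (b i - b (i+1)) + u*ν₀ * b i) :
    ∀ i : ℕ, 1 ≤ i → i ≤ N - 1 →
      u*ν₀*(a (i-1) * b i - a i * b (i+1)) + (1/(N:ℝ))*(a i - a (i+1))*(b i - b (i+1))
        = (((i:ℝ)-1)/N + u*ν₁)*(a (i-1) - a i)*(b (i-1) - b i)
          - ((i:ℝ)/N + u*ν₁)*(a i - a (i+1))*(b i - b (i+1)) := by
  intro i h1 h2
  have hiN : i < N := lt_of_le_of_lt h2 (Nat.pred_lt hN.ne')
  have ha := hra i h1 hiN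
  have hb := hrb i h1 hiN.le
  linear_combination (b i - b (i+1)) * ha - (a (i-1) - a i) * hb
end
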